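/- Let γ be a functor with domain C, a,b∈ob(C), and δ a functor with domain D, d₁,d₂∈ob(D). Suppose γ at a,b is modeled by δ at d₁,d₂ and δ fulfills (P) at d₁,d₂. Then γ fulfills (P) at a,b. -/
import Mathlib


open CategoryTheory

universe v u v₂ u₂ v₃ u₃ v₄ u₄

/-- A functor `δ` with domain `D` fulfills (P) at the pair `d₁, d₂`. -/
def FulfillsP {D : Type u} [Category.{v} D] {F : Type u₂} [Category.{v₂} F]
    (δ : D ⥤ F) (d₁ d₂ : D) : Prop :=
  ∀ r : ℕ, ∃ d₃ : D, ∀ χ : (d₁ ⟶ d₃) → Fin r, ∃ g : d₂ ⟶ d₃,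
    ∀ h₁ h₂ : d₁ ⟶ d₂, δ.map h₁ = δ.map h₂ → χ (h₁ ≫ g) = χ (h₂ ≫ g)

/-- Objects `c₁, c₂, c₃` of `C` and `d₁, d₂, d₃` of `D` are cross-related by `(φ, ψ)`:
there is `ζ : hom(d₁,d₃) → hom(c₁,c₃)` with `ζ(g · φ(f,g)) = ψ(g) · f` for all `f, g`. -/
def CrossRelatedBy {C : Type u} [Category.{v} C] {D : Type u₂} [Category.{v₂} D]
    (c₁ c₂ c₃ : C) (d₁ d₂ d₃ : D)
    (φ : (c₁ ⟶ c₂) → (d₂ ⟶ d₃) → (d₁ ⟶ d₂)) (ψ : (d₂ ⟶ d₃) → (c₂ ⟶ c₃)) : Prop :=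
  ∃ ζ : (d₁ ⟶ d₃) → (c₁ ⟶ c₃),
    ∀ (f : c₁ ⟶ c₂) (g : d₂ ⟶ d₃), ζ (φ f g ≫ g) = f ≫ ψ g

/-- `γ` at `c₁, c₂` is modeled by `δ` at `d₁, d₂`: for each `d₃` there is `c₃` such that
`c₁, c₂, c₃` and `d₁, d₂, d₃` are cross-related by some `(φ, ψ)` with
`γ(f) = γ(f')` implying `δ(φ(f,g)) = δ(φ(f',g))`. -/
def ModeledBy {C : Type u} [Category.{v} C] {E : Type u₃} [Category.{v₃} E]
    {D : Type u₂} [Category.{v₂} D] {F : Type u₄} [Category.{v₄} F]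
    (γ : C ⥤ E) (c₁ c₂ : C) (δ : D ⥤ F) (d₁ d₂ : D) : Prop :=
  ∀ d₃ : D, ∃ (c₃ : C) (φ : (c₁ ⟶ c₂) → (d₂ ⟶ d₃) → (d₁ ⟶ d₂))
      (ψ : (d₂ ⟶ d₃) → (c₂ ⟶ c₃)),
    CrossRelatedBy c₁ c₂ c₃ d₁ d₂ d₃ φ ψ ∧
    ∀ (f f' : c₁ ⟶ c₂) (g : d₂ ⟶ d₃),
      γ.map f = γ.map f' → δ.map (φ f g) = δ.map (φ f' g)

/-- If `γ` at `a, b` is modeled by `δ` at `d₁, d₂` and `δ` fulfills (P) at `d₁, d₂`,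
then `γ` fulfills (P) at `a, b`. -/
theorem fulfillsP_of_modeledBy {C : Type u} [Category.{v} C] {E : Type u₃} [Category.{v₃} E]
    {D : Type u₂} [Category.{v₂} D] {F : Type u₄} [Category.{v₄} F]
    (γ : C ⥤ E) (a b : C) (δ : D ⥤ F) (d₁ d₂ : D)
    (hmod : ModeledBy γ a b δ d₁ d₂) (hP : FulfillsP δ d₁ d₂) :
    FulfillsP γ a b := by
  intro r
  obtain ⟨d₃, hd₃⟩ := hP r
  obtain ⟨c₃, φ, ψ, ⟨ζ, hζ⟩, hcomp⟩ := hmod d₃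
  refine ⟨c₃, fun χ => ?_⟩
  obtain ⟨g, hg⟩ := hd₃ (fun h => χ (ζ h))
  refine ⟨ψ g, fun f₁ f₂ hf => ?_⟩
  have := hg (φ f₁ g) (φ f₂ g) (hcomp f₁ f₂ g hf)
  simpa [hζ] using this
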